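/- arXiv:1810.07976 — 3 statements merged into one kernel-verified Lean document; each statement's English description precedes it below -/
import Mathlib

section
/- The curvature is gauge covariant: for any gauge potential A on U and any smooth map γ : U → GL(n, ℝ), the curvature of the gauge transform satisfies F_{A^γ}(x)(v, w) = γ(x)⁻¹ · F_A(x)(v, w) · γ(x) for all x ∈ U and v, w ∈ ℝ^m. -/
noncomputable section

open Matrix

attribute [local instance]
  Matrix.linftyOpNormedAddCommGroup Matrix.linftyOpNormedRing Matrix.linftyOpNormedAlgebra

/-- The gauge transform `A^γ` (also used for the dressing operation `A^u`) of a gauge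
potential `A` by a `GL(n,ℝ)`-valued map `γ`:
`A^γ(x)(v) = γ(x)⁻¹ ⬝ A(x)(v) ⬝ γ(x) + γ(x)⁻¹ ⬝ (fderiv γ x v)`. -/
def gaugeTransform {m n : ℕ}
    (A : (Fin m → ℝ) → ((Fin m → ℝ) →L[ℝ] Matrix (Fin n) (Fin n) ℝ))
    (γ : (Fin m → ℝ) → (Matrix (Fin n) (Fin n) ℝ)ˣ) :
    (Fin m → ℝ) → ((Fin m → ℝ) →L[ℝ] Matrix (Fin n) (Fin n) ℝ) := fun x =>
  ((ContinuousLinearMap.mul ℝ (Matrix (Fin n) (Fin n) ℝ) (((γ x)⁻¹ : (Matrix (Fin n) (Fin n) ℝ)ˣ) : Matrix (Fin n) (Fin n) ℝ)).comp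
      (((ContinuousLinearMap.mul ℝ (Matrix (Fin n) (Fin n) ℝ)).flip ((γ x : Matrix (Fin n) (Fin n) ℝ))).comp (A x))) +
  (ContinuousLinearMap.mul ℝ (Matrix (Fin n) (Fin n) ℝ) (((γ x)⁻¹ : (Matrix (Fin n) (Fin n) ℝ)ˣ) : Matrix (Fin n) (Fin n) ℝ)).comp
      (fderiv ℝ (fun y => (γ y : Matrix (Fin n) (Fin n) ℝ)) x)

/-- The curvature 2-form of a gauge potential `A`:
`F_A(x)(v,w) = (fderiv A x v)(w) − (fderiv A x w)(v) + A(x)(v)A(x)(w) − A(x)(w)A(x)(v)`. -/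
def curvature {m n : ℕ}
    (A : (Fin m → ℝ) → ((Fin m → ℝ) →L[ℝ] Matrix (Fin n) (Fin n) ℝ)) :
    (Fin m → ℝ) → (Fin m → ℝ) → (Fin m → ℝ) → Matrix (Fin n) (Fin n) ℝ := fun x v w =>
  fderiv ℝ A x v w - fderiv ℝ A x w v + A x v * A x w - A x w * A x v

instance instNormedAddCommGroupGaugePotentialValues {m n : ℕ} :
    NormedAddCommGroup ((Fin m → ℝ) →L[ℝ] Matrix (Fin n) (Fin n) ℝ) :=
  ContinuousLinearMap.toNormedAddCommGroup

instance instNormedSpaceGaugePotentialValues {m n : ℕ} :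
    NormedSpace ℝ ((Fin m → ℝ) →L[ℝ] Matrix (Fin n) (Fin n) ℝ) :=
  ContinuousLinearMap.toNormedSpace

set_option maxHeartbeats 1000000 in
/-- The curvature is gauge covariant:
`F_{A^γ}(x)(v,w) = γ(x)⁻¹ ⬝ F_A(x)(v,w) ⬝ γ(x)` for `x ∈ U`. -/
theorem curvature_gauge_covariant {m n : ℕ}
    (U : Set (Fin m → ℝ)) (hU : IsOpen U)
    (A : (Fin m → ℝ) → ((Fin m → ℝ) →L[ℝ] Matrix (Fin n) (Fin n) ℝ))
    (γ : (Fin m → ℝ) → (Matrix (Fin n) (Fin n) ℝ)ˣ)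
    (hA : ContDiffOn ℝ (⊤ : ℕ∞) A U)
    (hγ : ContDiffOn ℝ (⊤ : ℕ∞) (fun x => (γ x : Matrix (Fin n) (Fin n) ℝ)) U) :
    ∀ x ∈ U, ∀ v w : Fin m → ℝ,
      curvature (gaugeTransform A γ) x v w
        = (((γ x)⁻¹ : (Matrix (Fin n) (Fin n) ℝ)ˣ) : Matrix (Fin n) (Fin n) ℝ)
            * curvature A x v w * (γ x : Matrix (Fin n) (Fin n) ℝ) := by
  intro x hx v w
  set R := Matrix (Fin n) (Fin n) ℝ
  set e : (Fin m → ℝ) → R := fun y => (γ y : Matrix (Fin n) (Fin n) ℝ) with he_def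
  set g : (Fin m → ℝ) → R := fun y => (((γ y)⁻¹ : (Matrix (Fin n) (Fin n) ℝ)ˣ) : Matrix (Fin n) (Fin n) ℝ) with hg_def
  have hUx : U ∈ nhds x := hU.mem_nhds hx
  have heC : ContDiffAt ℝ (⊤ : ℕ∞) e x := hγ.contDiffAt hUx
  have heD : DifferentiableAt ℝ e x := heC.differentiableAt (by simp)
  have heF : HasFDerivAt e (fderiv ℝ e x) x := heD.hasFDerivAt
  have hAC : ContDiffAt ℝ (⊤ : ℕ∞) A x := hA.contDiffAt hUx
  have hAD : DifferentiableAt ℝ A x := hAC.differentiableAt (by simp)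
  have hgeq : g = fun y => Ring.inverse (e y) := by
    funext y; exact (Ring.inverse_unit (γ y)).symm
  have hgC : ContDiffAt ℝ (⊤ : ℕ∞) g x := by
    rw [hgeq]; exact (contDiffAt_ringInverse ℝ (γ x)).comp x heC
  have hgD : DifferentiableAt ℝ g x := hgC.differentiableAt (by simp)
  have hgF : HasFDerivAt g
      ((-(ContinuousLinearMap.mulLeftRight ℝ R (g x) (g x))).comp (fderiv ℝ e x)) x := by
    have h := (hasFDerivAt_ringInverse (𝕜 := ℝ) (γ x)).comp x heF
    have hfun : g = Ring.inverse ∘ e := by rw [hgeq]; rfl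
    have hgx : (((γ x)⁻¹ : (Matrix (Fin n) (Fin n) ℝ)ˣ) : Matrix (Fin n) (Fin n) ℝ)
        = (Ring.inverse ∘ e) x := (Ring.inverse_unit (γ x)).symm
    rw [hfun, ← hgx]
    exact h
  -- derivative of fderiv e
  have hDeC : ContDiffOn ℝ (⊤ : ℕ∞) (fderiv ℝ e) U := hγ.fderiv_of_isOpen hU (by simp)
  have hDeD : DifferentiableAt ℝ (fderiv ℝ e) x := (hDeC.contDiffAt hUx).differentiableAt (by simp)
  have hsymm : fderiv ℝ (fderiv ℝ e) x v w = fderiv ℝ (fderiv ℝ e) x w v := by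
    refine second_derivative_symmetric_of_eventually (f := e) ?_ hDeD.hasFDerivAt v w
    filter_upwards [hU.mem_nhds hx] with y hy
    exact ((hγ.contDiffAt (hU.mem_nhds hy)).differentiableAt (by simp)).hasFDerivAt
  -- differentiability of the gauge transform
  have hmulg : DifferentiableAt ℝ (fun y => ContinuousLinearMap.mul ℝ R (g y)) x :=
    (ContinuousLinearMap.mul ℝ R).differentiable.differentiableAt.comp x hgD
  have hflip : DifferentiableAt ℝ (fun y => (ContinuousLinearMap.mul ℝ R).flip (e y)) x :=
    ((ContinuousLinearMap.mul ℝ R).flip).differentiable.differentiableAt.comp x heD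
  have hBdiff : DifferentiableAt ℝ (gaugeTransform A γ) x := by
    unfold gaugeTransform
    exact (hmulg.clm_comp (hflip.clm_comp hAD)).add (hmulg.clm_comp hDeD)
  have happ : ∀ v' w' : Fin m → ℝ, fderiv ℝ (gaugeTransform A γ) x v' w'
      = fderiv ℝ (fun y => gaugeTransform A γ y w') x v' := by
    intro v' w'
    erw [(hBdiff.hasFDerivAt.clm_apply (hasFDerivAt_const w' x)).fderiv]
    erw [ContinuousLinearMap.comp_zero, zero_add]
    rfl
  have hBapp : ∀ y : Fin m → ℝ, ∀ w' : Fin m → ℝ, gaugeTransform A γ y w'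
      = g y * (A y w' * e y) + g y * (fderiv ℝ e y w') := fun y w' => rfl
  have hAw : ∀ w' : Fin m → ℝ, HasFDerivAt (fun y => A y w') ((fderiv ℝ A x).flip w') x := by
    intro w'
    have h := hAD.hasFDerivAt.clm_apply (hasFDerivAt_const w' x)
    refine h.congr_fderiv ?_
    erw [ContinuousLinearMap.comp_zero, zero_add]
  have hDew : ∀ w' : Fin m → ℝ,
      HasFDerivAt (fun y => fderiv ℝ e y w') ((fderiv ℝ (fderiv ℝ e) x).flip w') x := by
    intro w'
    have h := hDeD.hasFDerivAt.clm_apply (hasFDerivAt_const w' x)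
    refine h.congr_fderiv ?_
    erw [ContinuousLinearMap.comp_zero, zero_add]
  have key : ∀ v' w' : Fin m → ℝ, fderiv ℝ (gaugeTransform A γ) x v' w' =
      (-(g x * fderiv ℝ e x v' * g x) * (A x w' * e x)
        + g x * (fderiv ℝ A x v' w' * e x + A x w' * fderiv ℝ e x v'))
      + (-(g x * fderiv ℝ e x v' * g x) * fderiv ℝ e x w'
        + g x * fderiv ℝ (fderiv ℝ e) x v' w') := by
    intro v' w'
    rw [happ v' w']
    have h2 : (fun y => gaugeTransform A γ y w')
        = fun y => g y * (A y w' * e y) + g y * (fderiv ℝ e y w') :=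
      funext fun y => hBapp y w'
    have h1 := (hgF.mul' ((hAw w').mul' heF)).add (hgF.mul' (hDew w'))
    rw [h2]
    erw [h1.fderiv]
    change g x * (A x w' * fderiv ℝ e x v' + fderiv ℝ A x v' w' * e x)
        + (-(g x * fderiv ℝ e x v' * g x)) * (A x w' * e x)
        + (g x * fderiv ℝ (fderiv ℝ e) x v' w' + (-(g x * fderiv ℝ e x v' * g x)) * fderiv ℝ e x w') = _
    noncomm_ring
  have hinv2 : ∀ t : R, e x * (g x * t) = t := by
    intro t
    rw [← mul_assoc]
    have : e x * g x = 1 := Units.mul_inv (γ x)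
    rw [this, one_mul]
  unfold curvature
  rw [key v w, key w v, hsymm]
  rw [hBapp x v, hBapp x w]
  simp only [mul_add, add_mul, mul_sub, sub_mul, neg_mul, mul_neg, mul_assoc, hinv2]
  abel
end
end

section
/- (Proposition 3, connection part.) If the dressing field transforms under a residual gauge transformation γ' as u ↦ γ'⁻¹uC, where C : U → GL(n, ℝ) is a smooth (twisting) map, then the dressed potential transforms as a twisted gauge potential: for any gauge potential A on U and smooth maps γ', u, C : U → GL(n, ℝ), one has (A^{γ'})^{γ'⁻¹uC} = (A^u)^{C}, i.e. the dressed potential gauge transforms by C rather than by γ'. -/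
noncomputable section

open Matrix

attribute [local instance]
  Matrix.linftyOpNormedAddCommGroup Matrix.linftyOpNormedRing Matrix.linftyOpNormedAlgebra

/-! Gauge transformations act on the right: `(A^a)^b = A^{ab}` at every point where `a` and `b`
are differentiable, by the Leibniz rule `d(ab) = (da) b + a (db)`. Both sides of the theorem are
therefore `A^{uC}`, because `γ' · γ'⁻¹uC = uC`. -/

theorem differentiableAt_units_val_inv {𝕜 E R : Type*} [NontriviallyNormedField 𝕜]
    [NormedAddCommGroup E] [NormedSpace 𝕜 E] [NormedRing R] [NormedAlgebra 𝕜 R] [CompleteSpace R]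
    {γ : E → Rˣ} {x : E} (hγ : DifferentiableAt 𝕜 (fun y => (γ y : R)) x) :
    DifferentiableAt 𝕜 (fun y => (((γ y)⁻¹ : Rˣ) : R)) x := by
  simpa only [Ring.inverse_unit] using hγ.inverse (γ x).isUnit

local notation "𝕄[" n "]" => Matrix (Fin n) (Fin n) ℝ

section

variable {m n : ℕ} (A : (Fin m → ℝ) → ((Fin m → ℝ) →L[ℝ] 𝕄[n]))

theorem gaugeTransform_apply (γ : (Fin m → ℝ) → 𝕄[n]ˣ) (x v : Fin m → ℝ) :
    gaugeTransform A γ x v = ((γ x)⁻¹ : 𝕄[n]ˣ) * A x v * γ x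
      + ((γ x)⁻¹ : 𝕄[n]ˣ) * fderiv ℝ (fun y => (γ y : 𝕄[n])) x v := by
  rw [mul_assoc]
  rfl

theorem gaugeTransform_gaugeTransform (a b : (Fin m → ℝ) → 𝕄[n]ˣ) {x : Fin m → ℝ}
    (ha : DifferentiableAt ℝ (fun y => (a y : 𝕄[n])) x)
    (hb : DifferentiableAt ℝ (fun y => (b y : 𝕄[n])) x) :
    gaugeTransform (gaugeTransform A a) b x = gaugeTransform A (fun y => a y * b y) x := by
  ext v : 1
  have leibniz : fderiv ℝ (fun y => ((a y * b y : 𝕄[n]ˣ) : 𝕄[n])) x v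
      = fderiv ℝ (fun y => (a y : 𝕄[n])) x v * b x + a x * fderiv ℝ (fun y => (b y : 𝕄[n])) x v := by
    simp only [Units.val_mul]
    refine (congrArg (fun L => L v) (fderiv_fun_mul' ha hb)).trans ?_
    simp only [_root_.add_apply, _root_.smul_apply, add_comm]
    -- the two sides differ only in the `linftyOp` vs. plain matrix instances
    rfl
  rw [gaugeTransform_apply, gaugeTransform_apply, gaugeTransform_apply, leibniz]
  simp only [Units.val_mul, _root_.mul_inv_rev, mul_add, add_mul, mul_assoc,
    Units.inv_mul_cancel_left, add_assoc]

end

theorem residual_gauge_twisted_general {m n : ℕ}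
    (U : Set (Fin m → ℝ)) (hU : IsOpen U)
    (A : (Fin m → ℝ) → ((Fin m → ℝ) →L[ℝ] Matrix (Fin n) (Fin n) ℝ))
    (γ' u C : (Fin m → ℝ) → (Matrix (Fin n) (Fin n) ℝ)ˣ)
    (hγ' : ContDiffOn ℝ ⊤ (fun x => (γ' x : Matrix (Fin n) (Fin n) ℝ)) U)
    (hu : ContDiffOn ℝ ⊤ (fun x => (u x : Matrix (Fin n) (Fin n) ℝ)) U)
    (hC : ContDiffOn ℝ ⊤ (fun x => (C x : Matrix (Fin n) (Fin n) ℝ)) U) :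
    ∀ x ∈ U, gaugeTransform (gaugeTransform A γ') (fun y => (γ' y)⁻¹ * u y * C y) x
      = gaugeTransform (gaugeTransform A u) C x := by
  intro x hx
  have smooth_differentiableAt {g : (Fin m → ℝ) → 𝕄[n]ˣ}
      (hg : ContDiffOn ℝ ⊤ (fun y => (g y : 𝕄[n])) U) :
      DifferentiableAt ℝ (fun y => (g y : 𝕄[n])) x :=
    (hg.differentiableOn (by simp)).differentiableAt (hU.mem_nhds hx)
  have hγ'x := smooth_differentiableAt hγ'
  have hux := smooth_differentiableAt hu
  have hCx := smooth_differentiableAt hC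
  have hdressed : DifferentiableAt ℝ (fun y => (((γ' y)⁻¹ * u y * C y : 𝕄[n]ˣ) : 𝕄[n])) x := by
    simp only [Units.val_mul]
    exact ((differentiableAt_units_val_inv hγ'x).fun_mul hux).fun_mul hCx
  rw [gaugeTransform_gaugeTransform A γ' _ hγ'x hdressed,
    gaugeTransform_gaugeTransform A u C hux hCx]
  simp only [mul_assoc, mul_inv_cancel_left]

/-- Proposition 3, connection part: if the dressing field transforms under a residual
gauge transformation `γ'` as `u ↦ γ'⁻¹uC`, with `C` a smooth twisting map, then the
dressed potential transforms as a twisted gauge potential: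
`(A^{γ'})^{γ'⁻¹uC} = (A^u)^C`. -/
theorem residual_gauge_twisted {m n : ℕ}
    (U : Set (Fin m → ℝ)) (hU : IsOpen U)
    (A : (Fin m → ℝ) → ((Fin m → ℝ) →L[ℝ] Matrix (Fin n) (Fin n) ℝ))
    (γ' u C : (Fin m → ℝ) → (Matrix (Fin n) (Fin n) ℝ)ˣ)
    (hA : @ContDiffOn ℝ _ _ _ _ _ ContinuousLinearMap.toNormedAddCommGroup _ ⊤ A U)
    (hγ' : ContDiffOn ℝ ⊤ (fun x => (γ' x : Matrix (Fin n) (Fin n) ℝ)) U)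
    (hu : ContDiffOn ℝ ⊤ (fun x => (u x : Matrix (Fin n) (Fin n) ℝ)) U)
    (hC : ContDiffOn ℝ ⊤ (fun x => (C x : Matrix (Fin n) (Fin n) ℝ)) U) :
    ∀ x ∈ U, gaugeTransform (gaugeTransform A γ') (fun y => (γ' y)⁻¹ * u y * C y) x
      = gaugeTransform (gaugeTransform A u) C x :=
  residual_gauge_twisted_general U hU A γ' u C hγ' hu hC
end
end

section
/- The twisting map composition law: for all z, z' > 0 and all row vectors υ, υ' ∈ ℝ^{1×4}, one has C(z'·z, υ' + υ) = C(z', υ') · Z'⁻¹ · C(z, υ) · Z', where Z' := diag(z', I₄, z'⁻¹). In particular C(z', υ')·C(z, υ) ≠ C(z'z, υ'+υ) in general, but the failure is exactly conjugation of the second factor by Z'. -/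
noncomputable section

open Matrix

/-- The 4×4 Minkowski metric `η = diag(1, −1, −1, −1)`. -/
def minkMetric : Matrix (Fin 4) (Fin 4) ℝ := Matrix.diagonal ![1, -1, -1, -1]

/-- A 6×6 real matrix assembled from blocks of sizes `1, 4, 1`. -/
def blk3 (a : Matrix (Fin 1) (Fin 1) ℝ) (b : Matrix (Fin 1) (Fin 4) ℝ) (c : Matrix (Fin 1) (Fin 1) ℝ)
    (d : Matrix (Fin 4) (Fin 1) ℝ) (e : Matrix (Fin 4) (Fin 4) ℝ) (f : Matrix (Fin 4) (Fin 1) ℝ)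
    (g : Matrix (Fin 1) (Fin 1) ℝ) (h : Matrix (Fin 1) (Fin 4) ℝ) (k : Matrix (Fin 1) (Fin 1) ℝ) :
    Matrix (Fin 1 ⊕ Fin 4 ⊕ Fin 1) (Fin 1 ⊕ Fin 4 ⊕ Fin 1) ℝ :=
  Matrix.of fun i j =>
    match i, j with
    | .inl i, .inl j => a i j
    | .inl i, .inr (.inl j) => b i j
    | .inl i, .inr (.inr j) => c i j
    | .inr (.inl i), .inl j => d i j
    | .inr (.inl i), .inr (.inl j) => e i j
    | .inr (.inl i), .inr (.inr j) => f i j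
    | .inr (.inr i), .inl j => g i j
    | .inr (.inr i), .inr (.inl j) => h i j
    | .inr (.inr i), .inr (.inr j) => k i j

/-- A real scalar as a 1×1 matrix. -/
def sc (x : ℝ) : Matrix (Fin 1) (Fin 1) ℝ := Matrix.of fun _ _ => x

/-- The conformal boost `u(r)`, for a row vector `r ∈ ℝ^{1×4}`, with block form
`[[1, r, ½ r rᵗ], [0, I₄, rᵗ], [0, 0, 1]]`, where `rᵗ = η⁻¹ rᵀ`. -/
def confBoost (r : Matrix (Fin 1) (Fin 4) ℝ) :
    Matrix (Fin 1 ⊕ Fin 4 ⊕ Fin 1) (Fin 1 ⊕ Fin 4 ⊕ Fin 1) ℝ :=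
  blk3 (sc 1) r ((1 / 2 : ℝ) • (r * (minkMetric⁻¹ * rᵀ)))
       0 1 (minkMetric⁻¹ * rᵀ)
       0 0 (sc 1)

/-- The twisting map `C(z, υ)`, a 6×6 real matrix with block form
`[[z, υ, (z⁻¹/2)·υυᵗ], [0, I₄, z⁻¹·υᵗ], [0, 0, z⁻¹]]`, where `υᵗ = η⁻¹υᵀ`. -/
def twistC (z : ℝ) (υ : Matrix (Fin 1) (Fin 4) ℝ) :
    Matrix (Fin 1 ⊕ Fin 4 ⊕ Fin 1) (Fin 1 ⊕ Fin 4 ⊕ Fin 1) ℝ :=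
  blk3 (sc z) υ ((z⁻¹ / 2) • (υ * (minkMetric⁻¹ * υᵀ)))
       0 1 (z⁻¹ • (minkMetric⁻¹ * υᵀ))
       0 0 (sc z⁻¹)

/-- The block-diagonal matrix `Z = diag(z, I₄, z⁻¹)`. -/
def dilZ (z : ℝ) : Matrix (Fin 1 ⊕ Fin 4 ⊕ Fin 1) (Fin 1 ⊕ Fin 4 ⊕ Fin 1) ℝ :=
  blk3 (sc z) 0 0 0 1 0 0 0 (sc z⁻¹)

/-! The twisting map factors as `C(z, υ) = u(υ) · Z(z)`, a conformal boost followed by a dilation.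
Boosts compose additively, `u(r + s) = u(r) · u(s)` (the cross terms `r sᵗ` and `s rᵗ` agree because
`η⁻¹` is symmetric), and dilations multiplicatively, so
`C(z', υ') · Z'⁻¹ · C(z, υ) · Z' = u(υ') · u(υ) · Z(z) · Z(z') = C(z'z, υ' + υ)`. -/

lemma blk3_mul (a b c d e f g h k a' b' c' d' e' f' g' h' k') :
    blk3 a b c d e f g h k * blk3 a' b' c' d' e' f' g' h' k' =
      blk3 (a * a' + b * d' + c * g') (a * b' + b * e' + c * h') (a * c' + b * f' + c * k')
        (d * a' + e * d' + f * g') (d * b' + e * e' + f * h') (d * c' + e * f' + f * k')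
        (g * a' + h * d' + k * g') (g * b' + h * e' + k * h') (g * c' + h * f' + k * k') := by
  ext (i | i | i) (j | j | j) <;> simp [blk3, mul_apply, Fintype.sum_sum_type, add_assoc]

lemma sc_mul_eq_smul (x : ℝ) {n : Type*} [Fintype n] (M : Matrix (Fin 1) n ℝ) :
    sc x * M = x • M := by
  ext i j
  simp [sc, mul_apply, Subsingleton.elim i 0]

lemma mul_sc_eq_smul (x : ℝ) {m : Type*} (M : Matrix m (Fin 1) ℝ) : M * sc x = x • M := by
  ext i j
  simp [sc, mul_apply, Subsingleton.elim j 0, mul_comm]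

lemma smul_sc (x y : ℝ) : x • sc y = sc (x * y) := by
  ext
  simp [sc]

lemma dilZ_mul (a b : ℝ) : dilZ a * dilZ b = dilZ (a * b) := by
  simp only [dilZ, blk3_mul, sc_mul_eq_smul, smul_sc]
  congr 1 <;> simp [mul_comm]

lemma dilZ_one : dilZ 1 = 1 := by
  ext (i | i | i) (j | j | j) <;> simp [dilZ, blk3, sc, one_apply, Fin.fin_one_eq_zero]

lemma dilZ_inv {z : ℝ} (hz : z ≠ 0) : (dilZ z)⁻¹ = dilZ z⁻¹ :=
  inv_eq_right_inv (by rw [dilZ_mul, mul_inv_cancel₀ hz, dilZ_one])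

lemma confBoost_add (r s : Matrix (Fin 1) (Fin 4) ℝ) :
    confBoost (r + s) = confBoost r * confBoost s := by
  have hsymm : s * (minkMetric⁻¹ * rᵀ) = r * (minkMetric⁻¹ * sᵀ) := by
    rw [← (isDiag_of_subsingleton (s * _)).isSymm.eq]
    simp [transpose_mul, (IsSymm.inv (isSymm_diagonal _)).eq, Matrix.mul_assoc, minkMetric]
  simp only [confBoost, blk3_mul, sc_mul_eq_smul, mul_sc_eq_smul]
  congr 1 <;> simp [Matrix.mul_add, Matrix.add_mul, hsymm] <;> module

lemma twistC_eq_confBoost_mul_dilZ (z : ℝ) (υ : Matrix (Fin 1) (Fin 4) ℝ) :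
    twistC z υ = confBoost υ * dilZ z := by
  simp only [twistC, confBoost, dilZ, blk3_mul, mul_sc_eq_smul, sc_mul_eq_smul]
  congr 1 <;> simp [smul_sc]
  module

/-- The twisting map composition law:
`C(z'·z, υ' + υ) = C(z', υ') · Z'⁻¹ · C(z, υ) · Z'` with `Z' = diag(z', I₄, z'⁻¹)`.
In particular `C(z', υ')·C(z, υ) ≠ C(z'z, υ' + υ)` in general, but the failure is exactly
conjugation of the second factor by `Z'`. -/
theorem twistC_composition :
    (∀ z z' : ℝ, 0 < z → 0 < z' → ∀ υ υ' : Matrix (Fin 1) (Fin 4) ℝ,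
      twistC (z' * z) (υ' + υ) = twistC z' υ' * (dilZ z')⁻¹ * twistC z υ * dilZ z') ∧
    ∃ (z z' : ℝ) (υ υ' : Matrix (Fin 1) (Fin 4) ℝ), 0 < z ∧ 0 < z' ∧
      twistC z' υ' * twistC z υ ≠ twistC (z' * z) (υ' + υ) := by
  refine ⟨fun z z' _ hz' υ υ' => ?_, ?_⟩
  · calc twistC (z' * z) (υ' + υ) = confBoost υ' * confBoost υ * dilZ (z * z') := by
          rw [twistC_eq_confBoost_mul_dilZ, confBoost_add, mul_comm z']
      _ = confBoost υ' * (dilZ z' * dilZ z'⁻¹) * confBoost υ * (dilZ z * dilZ z') := by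
          rw [dilZ_mul z', mul_inv_cancel₀ hz'.ne', dilZ_one, Matrix.mul_one, dilZ_mul,
            Matrix.mul_assoc]
      _ = twistC z' υ' * (dilZ z')⁻¹ * twistC z υ * dilZ z' := by
          simp only [twistC_eq_confBoost_mul_dilZ, dilZ_inv hz'.ne', Matrix.mul_assoc]
  · refine ⟨1, 2, !![1, 0, 0, 0], 0, one_pos, two_pos, fun h => ?_⟩
    -- the `υ`-block of `C(z', υ') · C(z, υ)` is `z' • υ + υ'`
    simp only [twistC, blk3_mul, sc_mul_eq_smul] at h
    have := congrFun (congrFun h (.inl 0)) (.inr (.inl 0))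
    norm_num [blk3] at this
end
end
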